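/- Existence of an optimal price for the target provider: fix capacities α_j > 0, delays d_{ij}, demands D_i > 0, perceived values b_j ∈ ℝ, weights w_p, w_d ∈ ℝ, w_q > 0, the rival providers' prices, and a maximum price p^{max} > 0. Let Ψ_s(p_s) = p_s · Σ_i f*_{is}(p_s), where F*(p_s) is the unique user-side Nash equilibrium when the target provider s charges price p_s. Then Ψ_s is continuous on [0, p^{max}] and attains its maximum there: there exists p*_s ∈ [0, p^{max}] with Ψ_s(p*_s) ≥ Ψ_s(p_s) for all p_s ∈ [0, p^{max}]. -/

import Mathlib

/-!
The Nash conditions are non-strict inequalities between costs that depend continuously on the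
price vector and the profile, so the pairs (price, equilibrium) form a closed set. Since all
profiles lie in a compact product of simplices and the equilibrium is unique, the equilibrium
map has a closed graph with compact range and is therefore continuous. The profit is then
continuous, and attains its maximum on the compact interval `[0, pmax]`.
-/

open Finset

noncomputable section

namespace PriLLM

/-- The set `Δᵢ` of feasible allocations for a user with total demand `Di`:
nonnegative vectors in `ℝ^m` whose coordinates sum to `Di`. -/
def simplex {m : ℕ} (Di : ℝ) : Set (Fin m → ℝ) :=
  {f | (∀ j, 0 ≤ f j) ∧ ∑ j, f j = Di}

/-- User `i`'s routing cost `Cᵢ(F) = Σⱼ fᵢⱼ (wₚ pⱼ + w_q Qⱼ(F) + w_d dᵢⱼ − bⱼ)`,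
where `Qⱼ(F) = (Σₖ fₖⱼ)/αⱼ` is the congestion factor of provider `j`. -/
def cost {n m : ℕ} (wp wq wd : ℝ) (p b α : Fin m → ℝ)
    (d : Fin n → Fin m → ℝ) (F : Fin n → Fin m → ℝ) (i : Fin n) : ℝ :=
  ∑ j, F i j * (wp * p j + wq * ((∑ k, F k j) / α j) + wd * d i j - b j)

open Topology Filter

theorem continuous_of_isClosed_of_unique {X Y : Type*} [TopologicalSpace X] [TopologicalSpace Y]
    {K : Set Y} (hK : IsCompact K) {S : Set (X × Y)} (hS : IsClosed S) {f : X → Y}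
    (hfK : ∀ x, f x ∈ K) (hfS : ∀ x, (x, f x) ∈ S)
    (hunique : ∀ x, ∀ y ∈ K, (x, y) ∈ S → y = f x) : Continuous f := by
  refine continuous_iff_continuousAt.2 fun x₀ ↦
    hK.tendsto_nhds_of_unique_mapClusterPt (.of_forall hfK) fun y hyK hy ↦ hunique x₀ y hyK ?_
  have hgraph : MapClusterPt (x₀, y) (𝓝 x₀) fun x ↦ (x, f x) := by
    refine mapClusterPt_iff_frequently.2 fun W hW ↦ ?_
    obtain ⟨U, hU, V, hV, hUV⟩ := mem_nhds_prod_iff.1 hW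
    exact ((mapClusterPt_iff_frequently.1 hy V hV).and_eventually hU).mono
      fun x hx ↦ hUV ⟨hx.2, hx.1⟩
  exact hS.mem_of_mapClusterPt hgraph (.of_forall hfS)

theorem isClosed_simplex {m : ℕ} (Di : ℝ) : IsClosed (simplex (m := m) Di) :=
  isClosed_Ici.inter (isClosed_eq (by fun_prop) continuous_const)

theorem isCompact_simplex {m : ℕ} (Di : ℝ) : IsCompact (simplex (m := m) Di) :=
  isCompact_Icc.of_isClosed_subset (isClosed_simplex Di) fun _ hf ↦
    ⟨hf.1, fun j ↦ hf.2 ▸ single_le_sum (fun k _ ↦ hf.1 k) (mem_univ j)⟩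

section RoutingGame

variable {n m : ℕ} (wp wq wd : ℝ) (b α : Fin m → ℝ) (d : Fin n → Fin m → ℝ)

theorem continuous_cost (i : Fin n) :
    Continuous fun z : (Fin m → ℝ) × (Fin n → Fin m → ℝ) ↦ cost wp wq wd z.1 b α d z.2 i := by
  unfold cost
  fun_prop

def IsNashEquilibrium (p : Fin m → ℝ) (D : Fin n → ℝ) (G : Fin n → Fin m → ℝ) : Prop :=
  (∀ i, G i ∈ simplex (D i)) ∧
    ∀ i, ∀ g ∈ simplex (D i),
      cost wp wq wd p b α d G i ≤ cost wp wq wd p b α d (Function.update G i g) i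

theorem isClosed_setOf_isNashEquilibrium (D : Fin n → ℝ) :
    IsClosed {z : (Fin m → ℝ) × (Fin n → Fin m → ℝ) |
      IsNashEquilibrium wp wq wd b α d z.1 D z.2} := by
  simp only [IsNashEquilibrium, Set.ofPred_and, Set.ofPred_forall]
  refine (isClosed_iInter fun i ↦ (isClosed_simplex _).preimage (by fun_prop)).inter
    (isClosed_iInter fun i ↦ isClosed_iInter fun g ↦ isClosed_iInter fun _ ↦
      isClosed_le (continuous_cost wp wq wd b α d i) ?_)
  exact (continuous_cost wp wq wd b α d i).comp
    (continuous_fst.prodMk (continuous_snd.update i continuous_const))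

end RoutingGame

theorem optimal_price_exists_general (n m : ℕ) (wp wd : ℝ) (wq : ℝ)
    (b : Fin m → ℝ) (α : Fin m → ℝ)
    (d : Fin n → Fin m → ℝ) (D : Fin n → ℝ)
    (s : Fin m) (prices : Fin m → ℝ) (pmax : ℝ) (hpmax : 0 < pmax)
    (Feq : ℝ → Fin n → Fin m → ℝ)
    (hNE : ∀ ps : ℝ,
      (∀ i, Feq ps i ∈ simplex (D i)) ∧
      ∀ i : Fin n, ∀ g ∈ simplex (D i),
        cost wp wq wd (Function.update prices s ps) b α d (Feq ps) i ≤
          cost wp wq wd (Function.update prices s ps) b α d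
            (Function.update (Feq ps) i g) i)
    (huniq : ∀ ps : ℝ, ∀ G : Fin n → Fin m → ℝ,
      (∀ i, G i ∈ simplex (D i)) →
      (∀ i : Fin n, ∀ g ∈ simplex (D i),
        cost wp wq wd (Function.update prices s ps) b α d G i ≤
          cost wp wq wd (Function.update prices s ps) b α d
            (Function.update G i g) i) →
      G = Feq ps) :
    ContinuousOn (fun ps : ℝ => ps * ∑ i, Feq ps i s) (Set.Icc 0 pmax) ∧
      ∃ pstar ∈ Set.Icc (0 : ℝ) pmax, ∀ ps ∈ Set.Icc (0 : ℝ) pmax,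
        ps * ∑ i, Feq ps i s ≤ pstar * ∑ i, Feq pstar i s := by
  have hFeq : Continuous Feq :=
    continuous_of_isClosed_of_unique (isCompact_univ_pi fun i ↦ isCompact_simplex (D i))
      ((isClosed_setOf_isNashEquilibrium wp wq wd b α d D).preimage
        ((continuous_const.update s continuous_fst).prodMk continuous_snd))
      (fun ps i _ ↦ (hNE ps).1 i) hNE
      fun ps G hG hNash ↦ huniq ps G (fun i ↦ hG i trivial) hNash.2
  have hprofit : Continuous fun ps : ℝ ↦ ps * ∑ i, Feq ps i s := by fun_prop
  obtain ⟨pstar, hpstar, hmax⟩ :=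
    isCompact_Icc.exists_isMaxOn (Set.nonempty_Icc.2 hpmax.le) hprofit.continuousOn
  exact ⟨hprofit.continuousOn, pstar, hpstar, fun ps hps ↦ hmax hps⟩

/-- Existence of an optimal price for the target provider: with rivals' prices,
capacities, delays, demands, perceived values and weights fixed, the profit
`Ψ_s(p_s) = p_s ⬝ Σᵢ f*ᵢ_s(p_s)` of the target provider `s` is continuous on
`[0, pᵐᵃˣ]` and attains its maximum there. The equilibrium map `Feq`, seen as a
function of the target's price `p_s` (with the full price vector
`Function.update prices s p_s`), is characterized by the hypotheses that
`Feq p_s` is a Nash equilibrium for every `p_s` and that every Nash equilibrium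
coincides with it. -/
theorem optimal_price_exists (n m : ℕ) (wp wd : ℝ) (wq : ℝ) (hwq : 0 < wq)
    (b : Fin m → ℝ) (α : Fin m → ℝ) (hα : ∀ j, 0 < α j)
    (d : Fin n → Fin m → ℝ) (D : Fin n → ℝ) (hD : ∀ i, 0 < D i)
    (s : Fin m) (prices : Fin m → ℝ) (pmax : ℝ) (hpmax : 0 < pmax)
    (Feq : ℝ → Fin n → Fin m → ℝ)
    (hNE : ∀ ps : ℝ,
      (∀ i, Feq ps i ∈ simplex (D i)) ∧
      ∀ i : Fin n, ∀ g ∈ simplex (D i),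
        cost wp wq wd (Function.update prices s ps) b α d (Feq ps) i ≤
          cost wp wq wd (Function.update prices s ps) b α d
            (Function.update (Feq ps) i g) i)
    (huniq : ∀ ps : ℝ, ∀ G : Fin n → Fin m → ℝ,
      (∀ i, G i ∈ simplex (D i)) →
      (∀ i : Fin n, ∀ g ∈ simplex (D i),
        cost wp wq wd (Function.update prices s ps) b α d G i ≤
          cost wp wq wd (Function.update prices s ps) b α d
            (Function.update G i g) i) →
      G = Feq ps) :
    ContinuousOn (fun ps : ℝ => ps * ∑ i, Feq ps i s) (Set.Icc 0 pmax) ∧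
      ∃ pstar ∈ Set.Icc (0 : ℝ) pmax, ∀ ps ∈ Set.Icc (0 : ℝ) pmax,
        ps * ∑ i, Feq ps i s ≤ pstar * ∑ i, Feq pstar i s :=
  optimal_price_exists_general n m wp wd wq b α d D s prices pmax hpmax Feq hNE huniq

end PriLLM
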